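/- Modified two-filter representation of the marginal likelihood: for every integer t with 2 ≤ t ≤ T − 1, one has p(y_{1:T}) = ∫_E ∫_E ∫_E γ_{t−1}(x_{t−1}) · γ̃_{t+1}(x_{t+1}) · f_t(x_{t−1}, x_t) · f_{t+1}(x_t, x_{t+1}) · g_t(x_t) / ξ_{t+1}(x_{t+1}) λ(dx_{t−1}) λ(dx_t) λ(dx_{t+1}), as an equality in [0,∞]. -/
import Mathlib


open MeasureTheory ENNReal

/-- The joint density of a hidden Markov model path `x : Fin k → E`
(representing `x_1, …, x_k`, with initial point `x0`):
`∏_{n=1}^k g_n(x_n) f_n(x_{n-1}, x_n)`. -/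
noncomputable def hmmDens {E : Type*} [MeasurableSpace E]
    (f : ℕ → E → E → ℝ≥0∞) (g : ℕ → E → ℝ≥0∞) (x0 : E)
    (k : ℕ) (x : Fin k → E) : ℝ≥0∞ :=
  ∏ i : Fin k,
    g ((i : ℕ) + 1) (x i) *
      f ((i : ℕ) + 1)
        (if _h : (i : ℕ) = 0 then x0
          else x ⟨(i : ℕ) - 1, Nat.lt_of_le_of_lt (Nat.sub_le _ _) i.isLt⟩)
        (x i)

/-- The marginal likelihood `p(y_{1:T})`. -/
noncomputable def marginalLik {E : Type*} [MeasurableSpace E] (lam : Measure E)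
    (f : ℕ → E → E → ℝ≥0∞) (g : ℕ → E → ℝ≥0∞) (x0 : E) (T : ℕ) : ℝ≥0∞ :=
  ∫⁻ x : Fin T → E, hmmDens f g x0 T x ∂(Measure.pi fun _ => lam)

/-- The forward unnormalized filter density `γ_n(x)`. -/
noncomputable def gammaFwd {E : Type*} [MeasurableSpace E] (lam : Measure E)
    (f : ℕ → E → E → ℝ≥0∞) (g : ℕ → E → ℝ≥0∞) (x0 : E) (n : ℕ) (x : E) : ℝ≥0∞ :=
  ∫⁻ u : Fin (n - 1) → E,
    hmmDens f g x0 (n - 1) u *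
      (g n x *
        f n
          (if h : n - 1 = 0 then x0
            else u ⟨n - 1 - 1, Nat.sub_lt (Nat.pos_of_ne_zero h) one_pos⟩)
          x) ∂(Measure.pi fun _ => lam)

/-- The density of the backward path segment `x_{n+1}, …, x_T` (as `v : Fin (T-n) → E`)
given `x_n = x`:  `∏_{p=n+1}^T g_p(x_p) f_p(x_{p-1}, x_p)`. -/
noncomputable def hmmBwdDens {E : Type*} [MeasurableSpace E]
    (f : ℕ → E → E → ℝ≥0∞) (g : ℕ → E → ℝ≥0∞)
    (T n : ℕ) (x : E) (v : Fin (T - n) → E) : ℝ≥0∞ :=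
  ∏ i : Fin (T - n),
    g (n + 1 + (i : ℕ)) (v i) *
      f (n + 1 + (i : ℕ))
        (if _h : (i : ℕ) = 0 then x
          else v ⟨(i : ℕ) - 1, Nat.lt_of_le_of_lt (Nat.sub_le _ _) i.isLt⟩)
        (v i)

/-- The backward unnormalized density `γ̃_n(x)`. -/
noncomputable def gammaBwd {E : Type*} [MeasurableSpace E] (lam : Measure E)
    (f : ℕ → E → E → ℝ≥0∞) (g : ℕ → E → ℝ≥0∞) (ξ : ℕ → E → ℝ≥0∞)
    (T n : ℕ) (x : E) : ℝ≥0∞ :=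
  ξ n x * g n x *
    ∫⁻ v : Fin (T - n) → E, hmmBwdDens f g T n x v ∂(Measure.pi fun _ => lam)

section TwoFilterAux

open MeasureTheory ENNReal

variable {E : Type*} [MeasurableSpace E]

/-- Last coordinate of a tuple, or `x0` for the empty tuple. -/
def lastOr {k : ℕ} (x0 : E) (u : Fin k → E) : E :=
  if h : k = 0 then x0 else u ⟨k - 1, Nat.sub_lt (Nat.pos_of_ne_zero h) one_pos⟩

lemma measurable_lastOr {k : ℕ} (x0 : E) : Measurable (lastOr x0 : (Fin k → E) → E) := by
  unfold lastOr
  by_cases h : k = 0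
  · simp only [dif_pos h]; exact measurable_const
  · simp only [dif_neg h]; exact measurable_pi_apply _

lemma lastOr_succ {k : ℕ} (x0 : E) (x : Fin (k + 1) → E) :
    lastOr x0 x = x (Fin.last k) := by
  rw [lastOr, dif_neg (Nat.succ_ne_zero k)]
  exact congrArg x (Fin.ext (by simp))

/-- Parametric backward density with explicit length `m` and base index. -/
noncomputable def bwdProd (f : ℕ → E → E → ℝ≥0∞) (g : ℕ → E → ℝ≥0∞)
    (m base : ℕ) (x : E) (v : Fin m → E) : ℝ≥0∞ :=
  ∏ i : Fin m,
    g (base + 1 + (i : ℕ)) (v i) *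
      f (base + 1 + (i : ℕ))
        (if _h : (i : ℕ) = 0 then x
          else v ⟨(i : ℕ) - 1, Nat.lt_of_le_of_lt (Nat.sub_le _ _) i.isLt⟩)
        (v i)

/-- Backward integral function. -/
noncomputable def Bfun (lam : Measure E) (f : ℕ → E → E → ℝ≥0∞) (g : ℕ → E → ℝ≥0∞)
    (m base : ℕ) (x : E) : ℝ≥0∞ :=
  ∫⁻ v : Fin m → E, bwdProd f g m base x v ∂(Measure.pi fun _ => lam)

/-- One-step backward integral operator. -/
noncomputable def Kfun (lam : Measure E) (f : ℕ → E → E → ℝ≥0∞) (g : ℕ → E → ℝ≥0∞)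
    (n : ℕ) (H : E → ℝ≥0∞) (b : E) : ℝ≥0∞ :=
  ∫⁻ c, g n c * f n b c * H c ∂lam

variable {lam : Measure E} [SigmaFinite lam]
variable {f : ℕ → E → E → ℝ≥0∞} {g : ℕ → E → ℝ≥0∞}

lemma measurable_f_comp {α : Type*} [MeasurableSpace α]
    (hf : ∀ n, Measurable (fun p : E × E => f n p.1 p.2)) (n : ℕ)
    {u v : α → E} (hu : Measurable u) (hv : Measurable v) :
    Measurable fun a => f n (u a) (v a) :=
  (hf n).comp (hu.prodMk hv)

lemma meas_kernel (hf : ∀ n, Measurable (fun p : E × E => f n p.1 p.2))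
    (hg : ∀ n, Measurable (g n)) (n : ℕ) (b : E) {H : E → ℝ≥0∞} (hH : Measurable H) :
    Measurable fun c : E => g n c * f n b c * H c :=
  ((hg n).mul (measurable_f_comp hf n measurable_const measurable_id)).mul hH

variable (hf : ∀ n, Measurable (fun p : E × E => f n p.1 p.2)) (hg : ∀ n, Measurable (g n))

include hf hg

lemma measurable_hmmDens (x0 : E) (k : ℕ) : Measurable (hmmDens f g x0 k) := by
  unfold hmmDens
  apply Finset.measurable_prod
  intro i _
  apply Measurable.mul
  · exact (hg _).comp (measurable_pi_apply i)
  · by_cases h : (i : ℕ) = 0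
    · simp only [dif_pos h]
      exact measurable_f_comp hf _ measurable_const (measurable_pi_apply i)
    · simp only [dif_neg h]
      exact measurable_f_comp hf _ (measurable_pi_apply _) (measurable_pi_apply i)

lemma measurable_bwdProd (m base : ℕ) :
    Measurable (fun p : E × (Fin m → E) => bwdProd f g m base p.1 p.2) := by
  unfold bwdProd
  apply Finset.measurable_prod
  intro i _
  apply Measurable.mul
  · exact (hg _).comp ((measurable_pi_apply i).comp measurable_snd)
  · by_cases h : (i : ℕ) = 0
    · simp only [dif_pos h]
      exact measurable_f_comp hf _ measurable_fst ((measurable_pi_apply i).comp measurable_snd)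
    · simp only [dif_neg h]
      exact measurable_f_comp hf _ ((measurable_pi_apply _).comp measurable_snd)
        ((measurable_pi_apply i).comp measurable_snd)

lemma measurable_Bfun (m base : ℕ) : Measurable (Bfun lam f g m base) := by
  have h : Measurable fun x : E => ∫⁻ v : Fin m → E, bwdProd f g m base x v
      ∂(Measure.pi fun _ => lam) :=
    Measurable.lintegral_prod_right' (measurable_bwdProd hf hg m base)
  exact h

lemma measurable_Kfun (n : ℕ) {H : E → ℝ≥0∞} (hH : Measurable H) :
    Measurable (Kfun lam f g n H) := by
  have h : Measurable fun b : E => ∫⁻ c, g n c * f n b c * H c ∂lam :=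
    Measurable.lintegral_prod_right'
      (f := fun p : E × E => g n p.2 * f n p.1 p.2 * H p.2)
      ((((hg n).comp measurable_snd).mul (measurable_f_comp hf n measurable_fst
        measurable_snd)).mul (hH.comp measurable_snd))
  exact h

omit hf hg

lemma hmmDens_snoc (x0 : E) (k : ℕ) (u : Fin k → E) (y : E) :
    hmmDens f g x0 (k + 1) (Fin.snoc u y) =
      hmmDens f g x0 k u * (g (k + 1) y * f (k + 1) (lastOr x0 u) y) := by
  unfold hmmDens
  rw [Fin.prod_univ_castSucc]
  refine congrArg₂ (· * ·) ?_ ?_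
  · apply Finset.prod_congr rfl
    intro i _
    simp only [Fin.coe_castSucc, Fin.snoc_castSucc]
    by_cases h : (i : ℕ) = 0
    · simp only [dif_pos h]
    · simp only [dif_neg h]
      congr 2
      exact Fin.snoc_castSucc (α := fun _ => E) (p := u) (x := y)
        (i := ⟨(i : ℕ) - 1, Nat.lt_of_le_of_lt (Nat.sub_le _ _) i.isLt⟩)
  · simp only [Fin.val_last, Fin.snoc_last]
    unfold lastOr
    by_cases h : k = 0
    · simp only [dif_pos h]
    · simp only [dif_neg h]
      congr 2
      exact Fin.snoc_castSucc (α := fun _ => E) (p := u) (x := y)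
        (i := ⟨k - 1, Nat.sub_lt (Nat.pos_of_ne_zero h) one_pos⟩)

lemma bwdProd_cons (m base : ℕ) (x y : E) (w : Fin m → E) :
    bwdProd f g (m + 1) base x (Fin.cons y w) =
      g (base + 1) y * f (base + 1) x y * bwdProd f g m (base + 1) y w := by
  unfold bwdProd
  rw [Fin.prod_univ_succ]
  refine congrArg₂ (· * ·) ?_ ?_
  · simp
  · apply Finset.prod_congr rfl
    intro i _
    have him := i.isLt
    simp only [Fin.val_succ, Fin.cons_succ]
    have hidx : base + 1 + ((i : ℕ) + 1) = base + 1 + 1 + (i : ℕ) := by omega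
    rw [hidx, dif_neg (Nat.succ_ne_zero (i : ℕ))]
    congr 2
    simp only [Nat.add_sub_cancel]
    by_cases h : (i : ℕ) = 0
    · simp [h]
    · rw [dif_neg h]
      obtain ⟨j, hj⟩ : ∃ j, (i : ℕ) = j + 1 := ⟨(i : ℕ) - 1, by omega⟩
      simp only [hj, Nat.add_sub_cancel]
      exact Fin.cons_succ (α := fun _ => E) (x := y) (p := w) (i := ⟨j, by omega⟩)

include hf hg

lemma Bfun_succ (m base : ℕ) (x : E) :
    Bfun lam f g (m + 1) base x =
      ∫⁻ y, g (base + 1) y * f (base + 1) x y * Bfun lam f g m (base + 1) y ∂lam := by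
  have hmp := (measurePreserving_piFinSuccAbove (fun _ : Fin (m + 1) => lam) 0).symm
    (MeasurableEquiv.piFinSuccAbove (fun _ => E) 0)
  have hmeas : Measurable fun v : Fin (m + 1) → E => bwdProd f g (m + 1) base x v :=
    (measurable_bwdProd hf hg (m + 1) base).comp (measurable_const.prodMk measurable_id)
  rw [Bfun, ← hmp.lintegral_comp hmeas]
  have hsymm : ∀ p : E × (Fin m → E),
      (MeasurableEquiv.piFinSuccAbove (fun _ : Fin (m + 1) => E) 0).symm p =
        Fin.cons p.1 p.2 := fun p => Fin.insertNth_zero' p.1 p.2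
  simp only [hsymm, bwdProd_cons]
  have hmeas2 : Measurable fun p : E × (Fin m → E) =>
      g (base + 1) p.1 * f (base + 1) x p.1 * bwdProd f g m (base + 1) p.1 p.2 :=
    (((hg _).comp measurable_fst).mul (measurable_f_comp hf _ measurable_const
      measurable_fst)).mul (measurable_bwdProd hf hg m (base + 1))
  rw [lintegral_prod _ hmeas2.aemeasurable]
  refine lintegral_congr fun y => ?_
  have hb : Measurable fun w : Fin m → E => bwdProd f g m (base + 1) y w :=
    (measurable_bwdProd hf hg m (base + 1)).comp (measurable_const.prodMk measurable_id)
  show (∫⁻ w : Fin m → E, g (base + 1) y * f (base + 1) x y * bwdProd f g m (base + 1) y w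
      ∂(Measure.pi fun _ => lam)) = g (base + 1) y * f (base + 1) x y * Bfun lam f g m (base + 1) y
  exact lintegral_const_mul _ hb

lemma fwdStep (x0 : E) (k : ℕ) {H : E → ℝ≥0∞} (hH : Measurable H) :
    (∫⁻ x : Fin (k + 1) → E, hmmDens f g x0 (k + 1) x * H (x (Fin.last k))
        ∂(Measure.pi fun _ => lam)) =
      ∫⁻ u : Fin k → E, hmmDens f g x0 k u * Kfun lam f g (k + 1) H (lastOr x0 u)
        ∂(Measure.pi fun _ => lam) := by
  have hmp := (measurePreserving_piFinSuccAbove (fun _ : Fin (k + 1) => lam)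
    (Fin.last k)).symm (MeasurableEquiv.piFinSuccAbove (fun _ => E) (Fin.last k))
  have hmeas : Measurable fun x : Fin (k + 1) → E =>
      hmmDens f g x0 (k + 1) x * H (x (Fin.last k)) :=
    (measurable_hmmDens hf hg x0 (k + 1)).mul (hH.comp (measurable_pi_apply _))
  rw [← hmp.lintegral_comp hmeas]
  have hsymm : ∀ p : E × (Fin k → E),
      (MeasurableEquiv.piFinSuccAbove (fun _ : Fin (k + 1) => E) (Fin.last k)).symm p =
        Fin.snoc p.2 p.1 := fun p => Fin.insertNth_last' p.1 p.2
  simp only [hsymm, Fin.snoc_last, hmmDens_snoc]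
  have hmeas2 : Measurable fun p : E × (Fin k → E) =>
      hmmDens f g x0 k p.2 * (g (k + 1) p.1 * f (k + 1) (lastOr x0 p.2) p.1) * H p.1 :=
    (((measurable_hmmDens hf hg x0 k).comp measurable_snd).mul
      (((hg _).comp measurable_fst).mul (measurable_f_comp hf _
        ((measurable_lastOr x0).comp measurable_snd) measurable_fst))).mul
      (hH.comp measurable_fst)
  rw [lintegral_prod_symm _ hmeas2.aemeasurable]
  refine lintegral_congr fun u => ?_
  show (∫⁻ y, hmmDens f g x0 k u * (g (k + 1) y * f (k + 1) (lastOr x0 u) y) * H y ∂lam) =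
    hmmDens f g x0 k u * Kfun lam f g (k + 1) H (lastOr x0 u)
  calc (∫⁻ y, hmmDens f g x0 k u * (g (k + 1) y * f (k + 1) (lastOr x0 u) y) * H y ∂lam)
      = ∫⁻ y, hmmDens f g x0 k u * (g (k + 1) y * f (k + 1) (lastOr x0 u) y * H y) ∂lam :=
        lintegral_congr fun y => mul_assoc _ _ _
    _ = hmmDens f g x0 k u * ∫⁻ y, g (k + 1) y * f (k + 1) (lastOr x0 u) y * H y ∂lam :=
        lintegral_const_mul _ (meas_kernel hf hg (k + 1) (lastOr x0 u) hH)
    _ = hmmDens f g x0 k u * Kfun lam f g (k + 1) H (lastOr x0 u) := rfl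

lemma fwdStep' (x0 : E) (k : ℕ) {H : E → ℝ≥0∞} (hH : Measurable H) :
    (∫⁻ x : Fin (k + 1) → E, hmmDens f g x0 (k + 1) x * H (lastOr x0 x)
        ∂(Measure.pi fun _ => lam)) =
      ∫⁻ u : Fin k → E, hmmDens f g x0 k u * Kfun lam f g (k + 1) H (lastOr x0 u)
        ∂(Measure.pi fun _ => lam) := by
  rw [← fwdStep hf hg x0 k hH]
  exact lintegral_congr fun x => by rw [lastOr_succ]

omit hf hg in
lemma Bfun_zero (base : ℕ) (x : E) : Bfun lam f g 0 base x = 1 := by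
  rw [Bfun]
  have h : ∀ v : Fin 0 → E, bwdProd f g 0 base x v = 1 := by
    intro v; rw [bwdProd]; simp
  simp only [h]
  rw [lintegral_one, Measure.pi_univ]
  simp

lemma bridge (x0 : E) (T : ℕ) :
    ∀ d k, k + d = T →
      marginalLik lam f g x0 T =
        ∫⁻ u : Fin k → E, hmmDens f g x0 k u * Bfun lam f g d k (lastOr x0 u)
          ∂(Measure.pi fun _ => lam) := by
  intro d
  induction d with
  | zero =>
    intro k hk
    have hkT : k = T := by omega
    subst hkT
    exact lintegral_congr fun u => by rw [Bfun_zero, mul_one]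
  | succ d ih =>
    intro k hk
    rw [ih (k + 1) (by omega), fwdStep' hf hg x0 k (measurable_Bfun hf hg d (k + 1))]
    refine lintegral_congr fun u => ?_
    rw [Bfun_succ hf hg d k (lastOr x0 u)]
    rfl

lemma swap_gamma (x0 : E) (k n : ℕ) {H : E → ℝ≥0∞} (hH : Measurable H) :
    (∫⁻ u : Fin k → E, hmmDens f g x0 k u * Kfun lam f g n H (lastOr x0 u)
        ∂(Measure.pi fun _ => lam)) =
      ∫⁻ a, (∫⁻ u : Fin k → E,
          hmmDens f g x0 k u * (g n a * f n (lastOr x0 u) a) ∂(Measure.pi fun _ => lam)) * H a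
        ∂lam := by
  have h1 : ∀ u : Fin k → E,
      hmmDens f g x0 k u * Kfun lam f g n H (lastOr x0 u) =
        ∫⁻ a, hmmDens f g x0 k u * (g n a * f n (lastOr x0 u) a * H a) ∂lam := fun u =>
    (lintegral_const_mul _ (meas_kernel hf hg n (lastOr x0 u) hH)).symm
  simp only [h1]
  have hm : AEMeasurable (Function.uncurry fun (u : Fin k → E) (a : E) =>
      hmmDens f g x0 k u * (g n a * f n (lastOr x0 u) a * H a))
      ((Measure.pi fun _ : Fin k => lam).prod lam) := by
    have hmm : Measurable fun p : (Fin k → E) × E =>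
        hmmDens f g x0 k p.1 * (g n p.2 * f n (lastOr x0 p.1) p.2 * H p.2) :=
      ((measurable_hmmDens hf hg x0 k).comp measurable_fst).mul
        ((((hg n).comp measurable_snd).mul (measurable_f_comp hf n
          ((measurable_lastOr x0).comp measurable_fst) measurable_snd)).mul
          (hH.comp measurable_snd))
    exact hmm.aemeasurable
  rw [lintegral_lintegral_swap hm]
  refine lintegral_congr fun a => ?_
  have h2 : ∀ u : Fin k → E,
      hmmDens f g x0 k u * (g n a * f n (lastOr x0 u) a * H a) =
        hmmDens f g x0 k u * (g n a * f n (lastOr x0 u) a) * H a := fun u =>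
    (mul_assoc _ _ _).symm
  simp only [h2]
  have hX : Measurable fun u : Fin k → E =>
      hmmDens f g x0 k u * (g n a * f n (lastOr x0 u) a) :=
    (measurable_hmmDens hf hg x0 k).mul
      (measurable_const.mul (measurable_f_comp hf n (measurable_lastOr x0) measurable_const))
  exact lintegral_mul_const _ hX

end TwoFilterAux

/-- **Modified two-filter representation of the marginal likelihood**: for `2 ≤ t ≤ T - 1`,
`p(y_{1:T}) = ∫∫∫ γ_{t-1}(x_{t-1}) γ̃_{t+1}(x_{t+1}) f_t(x_{t-1},x_t) f_{t+1}(x_t,x_{t+1})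
g_t(x_t) / ξ_{t+1}(x_{t+1}) λ(dx_{t-1}) λ(dx_t) λ(dx_{t+1})`. -/
theorem two_filter_marginal_likelihood_modified
    {E : Type*} [MeasurableSpace E] (lam : Measure E) [SigmaFinite lam]
    (T : ℕ) (hT : 1 ≤ T) (x0 : E)
    (f : ℕ → E → E → ℝ≥0∞) (g : ℕ → E → ℝ≥0∞) (ξ : ℕ → E → ℝ≥0∞)
    (hf : ∀ n, Measurable (fun p : E × E => f n p.1 p.2))
    (hg : ∀ n, Measurable (g n)) (hξ : ∀ n, Measurable (ξ n))
    (hffin : ∀ n x x', f n x x' ≠ ∞) (hgfin : ∀ n x, g n x ≠ ∞)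
    (hξpos : ∀ n x, 0 < ξ n x) (hξfin : ∀ n x, ξ n x ≠ ∞)
    (t : ℕ) (ht : 2 ≤ t) (ht' : t ≤ T - 1) :
    marginalLik lam f g x0 T =
      ∫⁻ xtm1, ∫⁻ xt, ∫⁻ xtp1,
        gammaFwd lam f g x0 (t - 1) xtm1 * gammaBwd lam f g ξ T (t + 1) xtp1 *
          f t xtm1 xt * f (t + 1) xt xtp1 * g t xt / ξ (t + 1) xtp1 ∂lam ∂lam ∂lam := by
  obtain ⟨s, rfl⟩ : ∃ s, t = s + 2 := ⟨t - 2, by omega⟩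
  have hT3 : s + 3 ≤ T := by omega
  have hB3 : Measurable (Bfun lam f g (T - (s + 3)) (s + 3)) := measurable_Bfun hf hg _ _
  have hJ2 : Measurable (Kfun lam f g (s + 3) (Bfun lam f g (T - (s + 3)) (s + 3))) :=
    measurable_Kfun hf hg _ hB3
  have hJ1 : Measurable (Kfun lam f g (s + 2)
      (Kfun lam f g (s + 3) (Bfun lam f g (T - (s + 3)) (s + 3)))) :=
    measurable_Kfun hf hg _ hJ2
  have key : marginalLik lam f g x0 T =
      ∫⁻ a, (∫⁻ u : Fin s → E, hmmDens f g x0 s u *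
          (g (s + 1) a * f (s + 1) (lastOr x0 u) a) ∂(Measure.pi fun _ => lam)) *
        Kfun lam f g (s + 2) (Kfun lam f g (s + 3) (Bfun lam f g (T - (s + 3)) (s + 3))) a
        ∂lam := by
    calc marginalLik lam f g x0 T
        = ∫⁻ x : Fin (s + 3) → E, hmmDens f g x0 (s + 3) x *
            Bfun lam f g (T - (s + 3)) (s + 3) (lastOr x0 x) ∂(Measure.pi fun _ => lam) :=
          bridge hf hg x0 T (T - (s + 3)) (s + 3) (by omega)
      _ = ∫⁻ u : Fin (s + 2) → E, hmmDens f g x0 (s + 2) u *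
            Kfun lam f g (s + 3) (Bfun lam f g (T - (s + 3)) (s + 3)) (lastOr x0 u)
            ∂(Measure.pi fun _ => lam) := fwdStep' hf hg x0 (s + 2) hB3
      _ = ∫⁻ u : Fin (s + 1) → E, hmmDens f g x0 (s + 1) u *
            Kfun lam f g (s + 2) (Kfun lam f g (s + 3) (Bfun lam f g (T - (s + 3)) (s + 3)))
              (lastOr x0 u) ∂(Measure.pi fun _ => lam) := fwdStep' hf hg x0 (s + 1) hJ2
      _ = ∫⁻ u : Fin s → E, hmmDens f g x0 s u *
            Kfun lam f g (s + 1) (Kfun lam f g (s + 2)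
              (Kfun lam f g (s + 3) (Bfun lam f g (T - (s + 3)) (s + 3))))
              (lastOr x0 u) ∂(Measure.pi fun _ => lam) := fwdStep' hf hg x0 s hJ1
      _ = _ := swap_gamma hf hg x0 s (s + 1) hJ1
  rw [key]
  simp only [show s + 2 - 1 = s + 1 from by omega, show s + 2 + 1 = s + 3 from by omega]
  refine lintegral_congr fun a => Eq.symm ?_
  have hc : ∀ b : E, (∫⁻ c, gammaFwd lam f g x0 (s + 1) a * gammaBwd lam f g ξ T (s + 3) c *
        f (s + 2) a b * f (s + 3) b c * g (s + 2) b / ξ (s + 3) c ∂lam) =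
      gammaFwd lam f g x0 (s + 1) a * f (s + 2) a b * g (s + 2) b *
        Kfun lam f g (s + 3) (Bfun lam f g (T - (s + 3)) (s + 3)) b := by
    intro b
    have hpt : ∀ c : E, gammaFwd lam f g x0 (s + 1) a * gammaBwd lam f g ξ T (s + 3) c *
          f (s + 2) a b * f (s + 3) b c * g (s + 2) b / ξ (s + 3) c =
        gammaFwd lam f g x0 (s + 1) a * f (s + 2) a b * g (s + 2) b *
          (g (s + 3) c * f (s + 3) b c * Bfun lam f g (T - (s + 3)) (s + 3) c) := by
      intro c
      have hB : gammaBwd lam f g ξ T (s + 3) c =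
          ξ (s + 3) c * g (s + 3) c * Bfun lam f g (T - (s + 3)) (s + 3) c := rfl
      rw [hB, eq_comm, ENNReal.eq_div_iff (hξpos _ _).ne' (hξfin _ _)]
      ring
    simp only [hpt]
    exact lintegral_const_mul _ (meas_kernel hf hg (s + 3) b hB3)
  simp only [hc]
  have hpt2 : ∀ b : E, gammaFwd lam f g x0 (s + 1) a * f (s + 2) a b * g (s + 2) b *
        Kfun lam f g (s + 3) (Bfun lam f g (T - (s + 3)) (s + 3)) b =
      gammaFwd lam f g x0 (s + 1) a * (g (s + 2) b * f (s + 2) a b *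
        Kfun lam f g (s + 3) (Bfun lam f g (T - (s + 3)) (s + 3)) b) := by
    intro b; ring
  simp only [hpt2]
  exact lintegral_const_mul _ (meas_kernel hf hg (s + 2) a hJ2)
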